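/- Let $F : (0,1) \to [0,\infty)$ be bounded on compact subsets of $(0,1)$, and suppose there are constants $C_1, C_2 > 0$ such that for all $r, \rho$ with $0 < 16r < 4\rho < 1$: $F(r) \le C_1 \frac{r}{\rho} F(4\rho) + C_2 \big(\frac{\rho}{r}\big)^{17}$. Then there exist $\theta \in (0,1/16)$ and a constant $C = C(C_1, C_2, \sup_{[\theta/4, 1/2]} F)$ such that $F(r) \le C$ for all $0 < r < 1/2$. -/

import Mathlib

open Set

/-- the abstract iteration lemma. If `F : (0,1) → [0,∞)` is bounded on compact
subsets of `(0,1)` and satisfies `F(r) ≤ C₁ (r/ρ) F(4ρ) + C₂ (ρ/r)^17` for `0 < 16r < 4ρ < 1`,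
then there are `θ ∈ (0,1/16)` and a constant `C` (depending on `C₁, C₂` and
`sup_{[θ/4,1/2]} F`) with `F(r) ≤ C` for all `0 < r < 1/2`. -/
theorem iteration_lemma (F : ℝ → ℝ) (C₁ C₂ : ℝ) (hC₁ : 0 < C₁) (hC₂ : 0 < C₂)
    (hF0 : ∀ r ∈ Ioo (0:ℝ) 1, 0 ≤ F r)
    (hFb : ∀ a b : ℝ, 0 < a → b < 1 → BddAbove (F '' Icc a b))
    (hiter : ∀ r ρ : ℝ, 0 < r → 16*r < 4*ρ → 4*ρ < 1 →
      F r ≤ C₁ * (r/ρ) * F (4*ρ) + C₂ * (ρ/r)^(17:ℕ)) :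
    ∃ θ ∈ Ioo (0:ℝ) (1/16), ∃ C : ℝ, ∀ r : ℝ, 0 < r → r < 1/2 → F r ≤ C := by
  set θ : ℝ := min (1/32) (1/(8*C₁)) with hθdef
  have hθpos : 0 < θ := lt_min (by norm_num) (by positivity)
  have hθ32 : θ ≤ 1/32 := min_le_left _ _
  have hθC₁ : C₁ * (4*θ) ≤ 1/2 := by
    have h : θ ≤ 1/(8*C₁) := min_le_right _ _
    have := mul_le_mul_of_nonneg_left h (le_of_lt hC₁)
    calc C₁ * (4*θ) = 4 * (C₁ * θ) := by ring
    _ ≤ 4 * (C₁ * (1/(8*C₁))) := by nlinarith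
    _ = 1/2 := by field_simp; ring
  obtain ⟨M, hM⟩ := hFb (θ/2) (1/2) (by positivity) (by norm_num)
  have hMmem : F (θ/2) ≤ M := hM ⟨θ/2, ⟨le_refl _, by linarith⟩, rfl⟩
  have hM0 : 0 ≤ M := le_trans (hF0 (θ/2) ⟨by positivity, by linarith⟩) hMmem
  set K : ℝ := C₂ * (1/(4*θ))^(17:ℕ) with hKdef
  have hK0 : 0 ≤ K := by positivity
  refine ⟨θ, ⟨hθpos, lt_of_le_of_lt hθ32 (by norm_num)⟩, M + 2*K, ?_⟩
  -- main induction: F r ≤ M + 2K for θ/2 * θ^n ≤ r < 1/2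
  have key : ∀ n : ℕ, ∀ r : ℝ, θ/2 * θ^n ≤ r → r < 1/2 → F r ≤ M + 2*K := by
    intro n
    induction n with
    | zero =>
      intro r hr hr2
      simp only [pow_zero, mul_one] at hr
      have : F r ≤ M := hM ⟨r, ⟨hr, le_of_lt hr2⟩, rfl⟩
      linarith
    | succ n ih =>
      intro r hr hr2
      rcases le_or_gt (θ/2) r with h | h
      · have : F r ≤ M := hM ⟨r, ⟨h, le_of_lt hr2⟩, rfl⟩
        linarith
      · -- apply the iteration step with ρ = r/(4θ)
        have hrpos : 0 < r := lt_of_lt_of_le (by positivity) hr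
        have hρ : (4 : ℝ) * (r/(4*θ)) = r/θ := by field_simp
        have hrθlt : r/θ < 1/2 := by
          rw [div_lt_iff₀ hθpos]; linarith
        have hstep := hiter r (r/(4*θ)) hrpos
          (by rw [hρ]; rw [lt_div_iff₀ hθpos]; nlinarith) (by rw [hρ]; linarith)
        rw [hρ] at hstep
        have hratio1 : r / (r/(4*θ)) = 4*θ := by
          field_simp
        have hratio2 : (r/(4*θ)) / r = 1/(4*θ) := by
          field_simp
        rw [hratio1, hratio2] at hstep
        have hIH : F (r/θ) ≤ M + 2*K := by
          apply ih
          · rw [le_div_iff₀ hθpos]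
            calc θ/2 * θ^n * θ = θ/2 * θ^(n+1) := by ring
            _ ≤ r := hr
          · exact hrθlt
        have hFnn : 0 ≤ F (r/θ) := hF0 _ ⟨by positivity, by linarith⟩
        calc F r ≤ C₁ * (4*θ) * F (r/θ) + K := hstep
        _ ≤ (1/2) * F (r/θ) + K := by nlinarith
        _ ≤ (1/2) * (M + 2*K) + K := by linarith
        _ ≤ M + 2*K := by linarith
  intro r hr hr2
  obtain ⟨n, hn⟩ := exists_pow_lt_of_lt_one hr (by linarith [hθ32] : θ < 1)
  exact key n r (by nlinarith [pow_nonneg (le_of_lt hθpos) n]) hr2
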